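/- arXiv:2602.19859 — 2 statements merged into one kernel-verified Lean document; each statement's English description precedes it below -/
import Mathlib

section
/- Let ξ = (ξ_1,…,ξ_p) ~ Dirichlet(α,…,α) and λ > 0 independent of ξ with finite second moment. For k ≠ l, Cov(λξ_k, λξ_l) is negative if Var(λ)/E[λ]² < 1/(pα), zero if Var(λ)/E[λ]² = 1/(pα), and positive if Var(λ)/E[λ]² > 1/(pα). -/
open MeasureTheory ProbabilityTheory

/-!
Independence of `λ` and `ξ` factors the moments of `λ ξ_k λ ξ_l`, so with `A = E[λ]`,
`B = E[λ²]` the covariance is `B E[ξ_k ξ_l] - A² / p²`. Inserting the Dirichlet moments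
`E[ξ_k ξ_l] = 1/p² - 1/(p²(pα+1))` turns it into
`A² pα / (p²(pα+1)) · (CV²(λ) - 1/(pα))`, a positive multiple of `CV²(λ) - 1/(pα)`.
-/

theorem ProbabilityTheory.IndepFun.integral_scale_mul_scale_sub
    {Ω : Type*} [MeasurableSpace Ω] {μ : Measure Ω} {lam X Y : Ω → ℝ}
    (hindep : IndepFun lam (fun ω => (X ω, Y ω)) μ) (hlam : AEStronglyMeasurable lam μ)
    (hX : AEStronglyMeasurable X μ) (hY : AEStronglyMeasurable Y μ) :
    (∫ ω, (lam ω * X ω) * (lam ω * Y ω) ∂μ)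
        - (∫ ω, lam ω * X ω ∂μ) * (∫ ω, lam ω * Y ω ∂μ)
      = (∫ ω, lam ω ^ 2 ∂μ) * (∫ ω, X ω * Y ω ∂μ)
        - (∫ ω, lam ω ∂μ) ^ 2 * ((∫ ω, X ω ∂μ) * (∫ ω, Y ω ∂μ)) := by
  have hX_indep : IndepFun lam X μ := hindep.comp measurable_id measurable_fst
  have hY_indep : IndepFun lam Y μ := hindep.comp measurable_id measurable_snd
  have hXY_indep : IndepFun (fun ω => lam ω ^ 2) (fun ω => X ω * Y ω) μ :=
    hindep.comp (measurable_id.pow_const 2) (measurable_fst.mul measurable_snd)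
  have hsq : ∫ ω, (lam ω * X ω) * (lam ω * Y ω) ∂μ = ∫ ω, lam ω ^ 2 * (X ω * Y ω) ∂μ :=
    integral_congr_ae (Filter.Eventually.of_forall fun ω => by ring)
  rw [hsq, hXY_indep.integral_fun_mul_eq_mul_integral (hlam.pow 2) (hX.mul hY),
    hX_indep.integral_fun_mul_eq_mul_integral hlam hX,
    hY_indep.integral_fun_mul_eq_mul_integral hlam hY]
  ring

theorem dirichlet_scale_cov_factor {p α A B : ℝ} (hp : 0 < p) (hα : 0 < α) (hA : A ≠ 0) :
    B * (1 / p * (1 / p) - 1 / (p ^ 2 * (p * α + 1))) - A ^ 2 * (1 / p * (1 / p))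
      = A ^ 2 * (p * α) / (p ^ 2 * (p * α + 1)) * ((B - A ^ 2) / A ^ 2 - 1 / (p * α)) := by
  have : p * α + 1 ≠ 0 := by positivity
  field_simp
  ring

theorem mul_sub_trichotomy {K x t : ℝ} (hK : 0 < K) :
    (x < t → K * (x - t) < 0) ∧ (x = t → K * (x - t) = 0) ∧ (t < x → 0 < K * (x - t)) :=
  ⟨fun h => mul_neg_of_pos_of_neg hK (sub_neg.2 h), fun h => by rw [h, sub_self, mul_zero],
    fun h => mul_pos hK (sub_pos.2 h)⟩

theorem dirichlet_scale_cov_sign_general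
    {Ω : Type*} [MeasurableSpace Ω] (μ : Measure Ω)
    (p : ℕ) (α : ℝ) (hα : 0 < α)
    (lam : Ω → ℝ) (ξ : Ω → Fin p → ℝ)
    (hlam_int : Integrable lam μ)
    (hlam_mean_pos : 0 < ∫ ω, lam ω ∂μ)
    (hindep : IndepFun lam ξ μ)
    (hmean : ∀ k, ∫ ω, ξ ω k ∂μ = 1 / p)
    (hcovξ : ∀ k l, k ≠ l →
      (∫ ω, ξ ω k * ξ ω l ∂μ) - (∫ ω, ξ ω k ∂μ) * (∫ ω, ξ ω l ∂μ)
        = -(1 / ((p : ℝ) ^ 2 * ((p : ℝ) * α + 1))))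
    (k l : Fin p) (hkl : k ≠ l) :
    ((((∫ ω, lam ω ^ 2 ∂μ) - (∫ ω, lam ω ∂μ) ^ 2) / (∫ ω, lam ω ∂μ) ^ 2
        < 1 / ((p : ℝ) * α)) →
      (∫ ω, (lam ω * ξ ω k) * (lam ω * ξ ω l) ∂μ)
        - (∫ ω, lam ω * ξ ω k ∂μ) * (∫ ω, lam ω * ξ ω l ∂μ) < 0) ∧
    ((((∫ ω, lam ω ^ 2 ∂μ) - (∫ ω, lam ω ∂μ) ^ 2) / (∫ ω, lam ω ∂μ) ^ 2
        = 1 / ((p : ℝ) * α)) →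
      (∫ ω, (lam ω * ξ ω k) * (lam ω * ξ ω l) ∂μ)
        - (∫ ω, lam ω * ξ ω k ∂μ) * (∫ ω, lam ω * ξ ω l ∂μ) = 0) ∧
    ((1 / ((p : ℝ) * α)
        < ((∫ ω, lam ω ^ 2 ∂μ) - (∫ ω, lam ω ∂μ) ^ 2) / (∫ ω, lam ω ∂μ) ^ 2) →
      0 < (∫ ω, (lam ω * ξ ω k) * (lam ω * ξ ω l) ∂μ)
        - (∫ ω, lam ω * ξ ω k ∂μ) * (∫ ω, lam ω * ξ ω l ∂μ)) := by
  have hp : (0 : ℝ) < p := Nat.cast_pos.2 k.pos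
  -- a non-integrable function has Bochner integral `0`, while `E[ξ_i] = 1/p ≠ 0`
  have hint : ∀ i, Integrable (fun ω => ξ ω i) μ := fun i =>
    .of_integral_ne_zero (by rw [hmean i]; positivity)
  have hpair : IndepFun lam (fun ω => (ξ ω k, ξ ω l)) μ :=
    hindep.comp measurable_id ((measurable_pi_apply k).prodMk (measurable_pi_apply l))
  have hprod : ∫ ω, ξ ω k * ξ ω l ∂μ = 1 / p * (1 / p) - 1 / ((p : ℝ) ^ 2 * (p * α + 1)) := by
    have h := hcovξ k l hkl
    rw [hmean k, hmean l] at h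
    linarith
  rw [hpair.integral_scale_mul_scale_sub hlam_int.aestronglyMeasurable (hint k).1 (hint l).1,
    hprod, hmean k, hmean l, dirichlet_scale_cov_factor hp hα hlam_mean_pos.ne']
  exact mul_sub_trichotomy (by positivity)

/-- Sign of the covariance of `λ ξ_k` and `λ ξ_l` is governed by the squared
coefficient of variation of `λ` relative to the threshold `1/(pα)`. -/
theorem dirichlet_scale_cov_sign
    {Ω : Type*} [MeasurableSpace Ω] (μ : Measure Ω) [IsProbabilityMeasure μ]
    (p : ℕ) (hp : 2 ≤ p) (α : ℝ) (hα : 0 < α)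
    (lam : Ω → ℝ) (ξ : Ω → Fin p → ℝ)
    (hlam_pos : ∀ ω, 0 < lam ω)
    (hlam_int : Integrable lam μ)
    (hlam_mean_pos : 0 < ∫ ω, lam ω ∂μ)
    (hlam_sq : Integrable (fun ω => lam ω ^ 2) μ)
    (hindep : IndepFun lam ξ μ)
    (hsimplex : ∀ ω, ∑ k, ξ ω k = 1)
    (hmean : ∀ k, ∫ ω, ξ ω k ∂μ = 1 / p)
    (hcovξ : ∀ k l, k ≠ l →
      (∫ ω, ξ ω k * ξ ω l ∂μ) - (∫ ω, ξ ω k ∂μ) * (∫ ω, ξ ω l ∂μ)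
        = -(1 / ((p : ℝ) ^ 2 * ((p : ℝ) * α + 1))))
    (k l : Fin p) (hkl : k ≠ l) :
    ((((∫ ω, lam ω ^ 2 ∂μ) - (∫ ω, lam ω ∂μ) ^ 2) / (∫ ω, lam ω ∂μ) ^ 2
        < 1 / ((p : ℝ) * α)) →
      (∫ ω, (lam ω * ξ ω k) * (lam ω * ξ ω l) ∂μ)
        - (∫ ω, lam ω * ξ ω k ∂μ) * (∫ ω, lam ω * ξ ω l ∂μ) < 0) ∧
    ((((∫ ω, lam ω ^ 2 ∂μ) - (∫ ω, lam ω ∂μ) ^ 2) / (∫ ω, lam ω ∂μ) ^ 2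
        = 1 / ((p : ℝ) * α)) →
      (∫ ω, (lam ω * ξ ω k) * (lam ω * ξ ω l) ∂μ)
        - (∫ ω, lam ω * ξ ω k ∂μ) * (∫ ω, lam ω * ξ ω l ∂μ) = 0) ∧
    ((1 / ((p : ℝ) * α)
        < ((∫ ω, lam ω ^ 2 ∂μ) - (∫ ω, lam ω ∂μ) ^ 2) / (∫ ω, lam ω ∂μ) ^ 2) →
      0 < (∫ ω, (lam ω * ξ ω k) * (lam ω * ξ ω l) ∂μ)
        - (∫ ω, lam ω * ξ ω k ∂μ) * (∫ ω, lam ω * ξ ω l ∂μ)) :=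
  dirichlet_scale_cov_sign_general μ p α hα lam ξ hlam_int hlam_mean_pos hindep hmean hcovξ k l hkl
end

section
/- Let z > 0 and let λ ~ C⁺(0,1) be half-Cauchy distributed. Then κ = 1/(1 + z²λ²) has density p(κ) = (1/π) · z / ((z² − 1)κ + 1) · 1/(√κ √(1−κ)) on (0,1), with E[κ] = 1/(1+z) and Var(κ) = z/(2(1+z)²). -/
/-!
For `z > 0` the map `λ ↦ κ = 1/(1+z²λ²)` is a bijection `(0,∞) → (0,1)` with inverse
`κ ↦ √(1-κ)/(z√κ)`, so the density of `κ` is the one-dimensional change of variables formula.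

The `n`-th moment of `κ` is `(2/π) ∫₀^∞ dλ / ((1+λ²)(1+z²λ²)ⁿ)`. For `z ≠ 1` the identity
`(1-z²)/((1+λ²)(1+z²λ²)) = 1/(1+λ²) - z²/(1+z²λ²)` reduces the cases `n = 1, 2` to the integrals
`∫₀^∞ (1+c²λ²)^(-k) dλ = c⁻¹ Jₖ` with `Jₖ = ∫₀^∞ (1+λ²)^(-k) dλ`; here `J₁ = π/2` and
`2m Jₘ₊₁ = (2m-1) Jₘ` by integrating `d/dλ (λ/(1+λ²)ᵐ)`. For `z = 1` the two integrals are `J₂`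
and `J₃` themselves.
-/

open MeasureTheory

/-- The half-Cauchy measure `C⁺(0,1)`: density `2/(π(1+λ²))` on `λ > 0`. -/
noncomputable def halfCauchy : Measure ℝ :=
  volume.withDensity (fun l => ENNReal.ofReal
    (if 0 < l then 2 / (Real.pi * (1 + l ^ 2)) else 0))

open Set Filter Real Topology
open scoped ENNReal

theorem integrable_inv_one_add_sq_pow {n : ℕ} (hn : n ≠ 0) :
    Integrable fun x : ℝ => ((1 + x ^ 2) ^ n)⁻¹ := by
  refine integrable_inv_one_add_sq.mono (by fun_prop) (.of_forall fun x => ?_)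
  have hx : (1 : ℝ) ≤ 1 + x ^ 2 := le_add_of_nonneg_right (sq_nonneg x)
  rw [norm_inv, norm_inv, Real.norm_of_nonneg (by positivity),
    Real.norm_of_nonneg (by positivity)]
  exact inv_anti₀ (by positivity) (le_self_pow₀ hx hn)

theorem integrable_inv_one_add_mul_sq_pow {c : ℝ} (hc : c ≠ 0) {n : ℕ} (hn : n ≠ 0) :
    Integrable fun x : ℝ => ((1 + c ^ 2 * x ^ 2) ^ n)⁻¹ := by
  simpa only [mul_pow] using (integrable_inv_one_add_sq_pow hn).comp_mul_left' hc

theorem integrable_inv_one_add_sq_mul_pow (c : ℝ) (n : ℕ) :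
    Integrable fun x : ℝ => ((1 + x ^ 2) * (1 + c ^ 2 * x ^ 2) ^ n)⁻¹ := by
  refine integrable_inv_one_add_sq.mono (by fun_prop) (.of_forall fun x => ?_)
  have hx : (1 : ℝ) ≤ (1 + c ^ 2 * x ^ 2) ^ n :=
    one_le_pow₀ (le_add_of_nonneg_right (by positivity))
  rw [norm_inv, norm_inv, Real.norm_of_nonneg (by positivity),
    Real.norm_of_nonneg (by positivity)]
  exact inv_anti₀ (by positivity) (le_mul_of_one_le_right (by positivity) hx)

theorem tendsto_div_one_add_sq_pow_atTop {n : ℕ} (hn : n ≠ 0) :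
    Tendsto (fun x : ℝ => x / (1 + x ^ 2) ^ n) atTop (𝓝 0) := by
  refine tendsto_of_tendsto_of_tendsto_of_le_of_le' tendsto_const_nhds
    tendsto_inv_atTop_zero ?_ ?_
  · filter_upwards [eventually_ge_atTop 0] with x hx using by positivity
  · filter_upwards [eventually_gt_atTop 0] with x hx
    have h : x ^ 2 ≤ (1 + x ^ 2) ^ n := (le_add_of_nonneg_left zero_le_one).trans
      (le_self_pow₀ (le_add_of_nonneg_right (sq_nonneg x)) hn)
    rw [div_le_iff₀ (by positivity), ← div_eq_inv_mul, le_div_iff₀ hx, ← sq]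
    exact h

theorem integral_Ioi_inv_one_add_sq_pow_succ_succ (m : ℕ) :
    ∫ x : ℝ in Ioi 0, ((1 + x ^ 2) ^ (m + 2))⁻¹
      = (2 * (m : ℝ) + 1) / (2 * m + 2) * ∫ x : ℝ in Ioi 0, ((1 + x ^ 2) ^ (m + 1))⁻¹ := by
  have hderiv : ∀ x ∈ Ici (0 : ℝ), HasDerivAt (fun x : ℝ => x / (1 + x ^ 2) ^ (m + 1))
      ((2 * (m : ℝ) + 2) * ((1 + x ^ 2) ^ (m + 2))⁻¹
        - (2 * m + 1) * ((1 + x ^ 2) ^ (m + 1))⁻¹) x := by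
    intro x _
    have hq : HasDerivAt (fun x : ℝ => (1 + x ^ 2) ^ (m + 1))
        ((m + 1 : ℕ) * (1 + x ^ 2) ^ m * (2 * x)) x := by
      simpa using ((hasDerivAt_pow 2 x).const_add 1).fun_pow (m + 1)
    have hne : (1 + x ^ 2) ^ (m + 1) ≠ 0 := by positivity
    refine ((hasDerivAt_id' x).fun_div hq hne).congr_deriv ?_
    field_simp
    push_cast
    ring
  have hint (k : ℕ) : IntegrableOn (fun x : ℝ => ((1 + x ^ 2) ^ (k + 1))⁻¹) (Ioi 0) :=
    (integrable_inv_one_add_sq_pow k.succ_ne_zero).integrableOn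
  have h := integral_Ioi_of_hasDerivAt_of_tendsto' hderiv
    (((hint (m + 1)).const_mul _).sub ((hint m).const_mul _))
    (tendsto_div_one_add_sq_pow_atTop m.succ_ne_zero)
  rw [integral_sub ((hint (m + 1)).const_mul _) ((hint m).const_mul _),
    integral_const_mul, integral_const_mul] at h
  simp only [zero_div, sub_zero, add_assoc, one_add_one_eq_two] at h
  rw [div_mul_eq_mul_div, eq_div_iff (by positivity)]
  linarith

theorem integral_Ioi_inv_one_add_sq_pow_one :
    ∫ x : ℝ in Ioi 0, ((1 + x ^ 2) ^ 1)⁻¹ = π / 2 := by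
  simp

theorem integral_Ioi_inv_one_add_sq_pow_two :
    ∫ x : ℝ in Ioi 0, ((1 + x ^ 2) ^ 2)⁻¹ = π / 4 := by
  rw [integral_Ioi_inv_one_add_sq_pow_succ_succ 0, integral_Ioi_inv_one_add_sq_pow_one]
  ring

theorem integral_Ioi_inv_one_add_sq_pow_three :
    ∫ x : ℝ in Ioi 0, ((1 + x ^ 2) ^ 3)⁻¹ = 3 * π / 16 := by
  rw [integral_Ioi_inv_one_add_sq_pow_succ_succ 1, integral_Ioi_inv_one_add_sq_pow_two]
  ring

theorem integral_Ioi_inv_one_add_mul_sq_pow {c : ℝ} (hc : 0 < c) (n : ℕ) :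
    ∫ x : ℝ in Ioi 0, ((1 + c ^ 2 * x ^ 2) ^ n)⁻¹
      = c⁻¹ * ∫ x : ℝ in Ioi 0, ((1 + x ^ 2) ^ n)⁻¹ := by
  have h := integral_comp_mul_left_Ioi (fun x : ℝ => ((1 + x ^ 2) ^ n)⁻¹) 0 hc
  simp only [mul_pow, mul_zero, smul_eq_mul] at h
  exact h

theorem one_sub_sq_ne_zero {z : ℝ} (hz : 0 ≤ z) (hz1 : z ≠ 1) : 1 - z ^ 2 ≠ 0 :=
  sub_ne_zero.2 (Ne.symm ((pow_eq_one_iff_of_nonneg hz two_ne_zero).not.2 hz1))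

theorem integral_Ioi_inv_one_add_sq_mul_one_add_mul_sq {z : ℝ} (hz : 0 < z) :
    ∫ x : ℝ in Ioi 0, ((1 + x ^ 2) * (1 + z ^ 2 * x ^ 2))⁻¹ = π / (2 * (1 + z)) := by
  rcases eq_or_ne z 1 with rfl | hz1
  · simp only [one_pow, one_mul, ← sq, integral_Ioi_inv_one_add_sq_pow_two]
    ring
  · have h1z := one_sub_sq_ne_zero hz.le hz1
    have hsplit (x : ℝ) : ((1 + x ^ 2) * (1 + z ^ 2 * x ^ 2))⁻¹
        = (1 - z ^ 2)⁻¹ * (((1 + x ^ 2) ^ 1)⁻¹ - z ^ 2 * ((1 + z ^ 2 * x ^ 2) ^ 1)⁻¹) := by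
      field_simp
      ring
    simp_rw [hsplit]
    rw [integral_const_mul,
      integral_sub (integrable_inv_one_add_sq_pow one_ne_zero).integrableOn
      ((integrable_inv_one_add_mul_sq_pow hz.ne' one_ne_zero).const_mul _).integrableOn,
      integral_const_mul, integral_Ioi_inv_one_add_mul_sq_pow hz,
      integral_Ioi_inv_one_add_sq_pow_one]
    field_simp
    ring

theorem integral_Ioi_inv_one_add_sq_mul_one_add_mul_sq_sq {z : ℝ} (hz : 0 < z) :
    ∫ x : ℝ in Ioi 0, ((1 + x ^ 2) * (1 + z ^ 2 * x ^ 2) ^ 2)⁻¹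
      = π * (2 + z) / (4 * (1 + z) ^ 2) := by
  rcases eq_or_ne z 1 with rfl | hz1
  · simp only [one_pow, one_mul, ← pow_succ', integral_Ioi_inv_one_add_sq_pow_three]
    ring
  · have h1z := one_sub_sq_ne_zero hz.le hz1
    have hsplit (x : ℝ) : ((1 + x ^ 2) * (1 + z ^ 2 * x ^ 2) ^ 2)⁻¹
        = (1 - z ^ 2)⁻¹ * (((1 + x ^ 2) * (1 + z ^ 2 * x ^ 2) ^ 1)⁻¹
          - z ^ 2 * ((1 + z ^ 2 * x ^ 2) ^ 2)⁻¹) := by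
      field_simp
      ring
    simp_rw [hsplit]
    rw [integral_const_mul, integral_sub (integrable_inv_one_add_sq_mul_pow z 1).integrableOn
      ((integrable_inv_one_add_mul_sq_pow hz.ne' two_ne_zero).const_mul _).integrableOn,
      integral_const_mul, integral_Ioi_inv_one_add_mul_sq_pow hz,
      integral_Ioi_inv_one_add_sq_pow_two]
    simp only [pow_one, integral_Ioi_inv_one_add_sq_mul_one_add_mul_sq hz]
    field_simp
    ring

theorem map_withDensity_indicator_of_leftInvOn {f g g' : ℝ → ℝ} {S T : Set ℝ}
    (hf : Measurable f) (hS : MeasurableSet S) (hT : MeasurableSet T)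
    (hg' : ∀ y ∈ T, HasDerivWithinAt g (g' y) T y) (hfg : LeftInvOn f g T) (hgT : g '' T = S)
    (ρ : ℝ → ℝ≥0∞) :
    (volume.withDensity (S.indicator ρ)).map f
      = volume.withDensity (T.indicator fun y => ENNReal.ofReal |g' y| * ρ (g y)) := by
  ext s hs
  have himage : g '' (s ∩ T) = f ⁻¹' s ∩ S := by rw [hfg.image_inter', hgT]
  rw [Measure.map_apply hf hs, withDensity_apply _ (hf hs), withDensity_apply _ hs,
    lintegral_indicator hS, lintegral_indicator hT, Measure.restrict_restrict hS,
    Measure.restrict_restrict hT, inter_comm S, ← himage, inter_comm T]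
  exact lintegral_image_eq_lintegral_abs_deriv_mul (hs.inter hT)
    (fun y hy => (hg' y hy.2).mono inter_subset_right) (hfg.injOn.mono inter_subset_right) ρ

theorem halfCauchy_eq_withDensity_indicator :
    halfCauchy =
      volume.withDensity ((Ioi 0).indicator fun l => ENNReal.ofReal (2 / (π * (1 + l ^ 2)))) := by
  rw [halfCauchy]
  congr 1
  ext l
  by_cases hl : 0 < l <;> simp [hl]

theorem integral_halfCauchy (h : ℝ → ℝ) :
    ∫ l, h l ∂halfCauchy = ∫ l in Ioi 0, 2 / (π * (1 + l ^ 2)) * h l := by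
  rw [halfCauchy_eq_withDensity_indicator, withDensity_indicator measurableSet_Ioi,
    integral_withDensity_eq_integral_toReal_smul (by fun_prop)
      (.of_forall fun _ => ENNReal.ofReal_lt_top)]
  refine setIntegral_congr_fun measurableSet_Ioi fun l _ => ?_
  rw [ENNReal.toReal_ofReal (by positivity), smul_eq_mul]

noncomputable def shrinkage (z l : ℝ) : ℝ := 1 / (1 + z ^ 2 * l ^ 2)

noncomputable def shrinkageInv (z κ : ℝ) : ℝ := √(1 - κ) / (z * √κ)

theorem measurable_shrinkage (z : ℝ) : Measurable (shrinkage z) := by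
  unfold shrinkage; fun_prop

theorem sq_shrinkageInv {z κ : ℝ} (hκ0 : 0 ≤ κ) (hκ1 : κ ≤ 1) :
    shrinkageInv z κ ^ 2 = (1 - κ) / (z ^ 2 * κ) := by
  rw [shrinkageInv, div_pow, mul_pow, sq_sqrt (sub_nonneg.2 hκ1), sq_sqrt hκ0]

theorem leftInvOn_shrinkage_shrinkageInv {z : ℝ} (hz : z ≠ 0) :
    LeftInvOn (shrinkage z) (shrinkageInv z) (Ioo 0 1) := by
  rintro κ ⟨hκ0, hκ1⟩
  rw [shrinkage, sq_shrinkageInv hκ0.le hκ1.le]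
  field_simp
  ring

theorem shrinkageInv_pos {z κ : ℝ} (hz : 0 < z) (hκ : κ ∈ Ioo 0 1) : 0 < shrinkageInv z κ :=
  div_pos (sqrt_pos.2 (sub_pos.2 hκ.2)) (mul_pos hz (sqrt_pos.2 hκ.1))

theorem image_shrinkageInv_Ioo {z : ℝ} (hz : 0 < z) : shrinkageInv z '' Ioo 0 1 = Ioi 0 := by
  refine (image_subset_iff.2 fun κ hκ => shrinkageInv_pos hz hκ).antisymm
    fun l (hl : 0 < l) => ?_
  have hd : 0 < 1 + z ^ 2 * l ^ 2 := by positivity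
  have hκ : shrinkage z l ∈ Ioo 0 1 := ⟨by unfold shrinkage; positivity,
    (div_lt_one hd).2 (lt_add_of_pos_right 1 (by positivity))⟩
  refine ⟨shrinkage z l, hκ, (pow_left_inj₀ (shrinkageInv_pos hz hκ).le hl.le two_ne_zero).1 ?_⟩
  rw [sq_shrinkageInv hκ.1.le hκ.2.le, shrinkage]
  field_simp
  ring

theorem hasDerivAt_shrinkageInv {z κ : ℝ} (hz : z ≠ 0) (hκ : κ ∈ Ioo 0 1) :
    HasDerivAt (shrinkageInv z) (-(2 * z * κ * √κ * √(1 - κ))⁻¹) κ := by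
  have h0 : √κ ≠ 0 := (sqrt_pos.2 hκ.1).ne'
  have h1 : √(1 - κ) ≠ 0 := (sqrt_pos.2 (sub_pos.2 hκ.2)).ne'
  have hnum : HasDerivAt (fun κ => √(1 - κ)) (-1 / (2 * √(1 - κ))) κ :=
    ((hasDerivAt_id κ).const_sub 1).sqrt (sub_pos.2 hκ.2).ne'
  have hden : HasDerivAt (fun κ => z * √κ) (z * (1 / (2 * √κ))) κ :=
    ((hasDerivAt_id κ).sqrt hκ.1.ne').const_mul z
  refine (hnum.fun_div hden (mul_ne_zero hz h0)).congr_deriv ?_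
  field_simp
  rw [sq_sqrt hκ.1.le, sq_sqrt (sub_pos.2 hκ.2).le, div_self hκ.1.ne']
  ring

theorem abs_deriv_shrinkageInv_mul {z κ : ℝ} (hz : 0 < z) (hκ : κ ∈ Ioo 0 1) :
    |(-(2 * z * κ * √κ * √(1 - κ))⁻¹)| * (2 / (π * (1 + shrinkageInv z κ ^ 2)))
      = 1 / π * z / ((z ^ 2 - 1) * κ + 1) * (1 / (√κ * √(1 - κ))) := by
  obtain ⟨hκ0, hκ1⟩ := hκ
  have hs0 := sqrt_pos.2 hκ0
  have hs1 := sqrt_pos.2 (sub_pos.2 hκ1)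
  have hD : 0 < (z ^ 2 - 1) * κ + 1 := by nlinarith
  rw [abs_neg, abs_of_pos (by positivity), sq_shrinkageInv hκ0.le hκ1.le]
  field_simp
  rw [eq_div_iff (by linarith)]
  ring

theorem map_shrinkage_halfCauchy {z : ℝ} (hz : 0 < z) :
    halfCauchy.map (shrinkage z) = volume.withDensity fun κ => ENNReal.ofReal
      (if κ ∈ Ioo 0 1 then 1 / π * z / ((z ^ 2 - 1) * κ + 1) * (1 / (√κ * √(1 - κ))) else 0) := by
  rw [halfCauchy_eq_withDensity_indicator, map_withDensity_indicator_of_leftInvOn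
    (measurable_shrinkage z) measurableSet_Ioi measurableSet_Ioo
    (fun κ hκ => (hasDerivAt_shrinkageInv hz.ne' hκ).hasDerivWithinAt)
    (leftInvOn_shrinkage_shrinkageInv hz.ne') (image_shrinkageInv_Ioo hz)]
  congr 1
  ext κ
  by_cases hκ : κ ∈ Ioo 0 1
  · rw [indicator_of_mem hκ, if_pos hκ, ← ENNReal.ofReal_mul (abs_nonneg _),
      abs_deriv_shrinkageInv_mul hz hκ]
  · rw [indicator_of_notMem hκ, if_neg hκ, ENNReal.ofReal_zero]

theorem integral_pow_map_shrinkage_halfCauchy (z : ℝ) (n : ℕ) :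
    ∫ κ, κ ^ n ∂halfCauchy.map (shrinkage z)
      = 2 / π * ∫ l in Ioi 0, ((1 + l ^ 2) * (1 + z ^ 2 * l ^ 2) ^ n)⁻¹ := by
  rw [integral_map (measurable_shrinkage z).aemeasurable (by fun_prop), integral_halfCauchy,
    ← integral_const_mul]
  refine setIntegral_congr_fun measurableSet_Ioi fun l _ => ?_
  simp only [shrinkage, mul_inv, div_eq_mul_inv]
  ring

/-- If `λ ~ C⁺(0,1)` and `z > 0`, then `κ = 1/(1+z²λ²)` has density
`(1/π) z/((z²−1)κ+1) · 1/(√κ√(1−κ))` on `(0,1)`, with mean `1/(1+z)` and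
variance `z/(2(1+z)²)`. -/
theorem halfCauchy_shrinkage_density_mean_var (z : ℝ) (hz : 0 < z) :
    (Measure.map (fun l : ℝ => 1 / (1 + z ^ 2 * l ^ 2)) halfCauchy
      = volume.withDensity (fun κ => ENNReal.ofReal
          (if κ ∈ Set.Ioo (0 : ℝ) 1 then
            (1 / Real.pi) * z / ((z ^ 2 - 1) * κ + 1)
              * (1 / (Real.sqrt κ * Real.sqrt (1 - κ)))
          else 0)))
    ∧ (∫ κ, κ ∂(Measure.map (fun l : ℝ => 1 / (1 + z ^ 2 * l ^ 2)) halfCauchy))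
        = 1 / (1 + z)
    ∧ (∫ κ, κ ^ 2 ∂(Measure.map (fun l : ℝ => 1 / (1 + z ^ 2 * l ^ 2)) halfCauchy))
        - (∫ κ, κ ∂(Measure.map (fun l : ℝ => 1 / (1 + z ^ 2 * l ^ 2)) halfCauchy)) ^ 2
        = z / (2 * (1 + z) ^ 2) := by
  have hmean : ∫ κ, κ ∂halfCauchy.map (shrinkage z) = 1 / (1 + z) := by
    have h := integral_pow_map_shrinkage_halfCauchy z 1
    simp only [pow_one] at h
    rw [h, integral_Ioi_inv_one_add_sq_mul_one_add_mul_sq hz]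
    field_simp
  have hsecond : ∫ κ, κ ^ 2 ∂halfCauchy.map (shrinkage z) = (2 + z) / (2 * (1 + z) ^ 2) := by
    rw [integral_pow_map_shrinkage_halfCauchy,
      integral_Ioi_inv_one_add_sq_mul_one_add_mul_sq_sq hz]
    field_simp
    norm_num
  refine ⟨map_shrinkage_halfCauchy hz, hmean, ?_⟩
  change ∫ κ, κ ^ 2 ∂halfCauchy.map (shrinkage z) - (∫ κ, κ ∂halfCauchy.map (shrinkage z)) ^ 2 = _
  rw [hsecond, hmean]
  field_simp
  ring
end
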